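/- (Lemma 3.4) The kernels q_{n−j}^{(n)} are complementary to the DOC kernels θ_{n−j}^{(n)}: for all 1 ≤ k ≤ n ≤ N one has ∑_{j=k}^{n} q_{n−j}^{(n)} θ_{j−k}^{(j)} = 1. -/

import Mathlib

open Finset intervalIntegral Matrix

noncomputable def omegaK (μ s : ℝ) : ℝ := s ^ (μ - 1) / Real.Gamma μ

noncomputable def qK (α : ℝ) (t : ℕ → ℝ) (n k : ℕ) : ℝ :=
  ∫ s in (t (k - 1))..(t k), omegaK α (t n - s)

noncomputable def aK (α : ℝ) (t : ℕ → ℝ) (n k : ℕ) : ℝ :=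
  if k = n then qK α t n n else qK α t n k - qK α t (n - 1) k

noncomputable def thetaAux (A : ℕ → ℕ → ℝ) (n : ℕ) : ℕ → ℕ → ℝ
  | 0, m => if m = 0 then 1 / A n n else 0
  | M + 1, m =>
      if m ≤ M then thetaAux A n M m
      else -(1 / A (n - (M + 1)) (n - (M + 1))) *
        ∑ ℓ ∈ Finset.range (M + 1), thetaAux A n M ℓ * A (n - ℓ) (n - (M + 1))

noncomputable def thetaK (α : ℝ) (t : ℕ → ℝ) (n k : ℕ) : ℝ :=
  thetaAux (aK α t) n (n - k) (n - k)

noncomputable def Hfun (a b : ℝ) : ℝ := a ^ 3 / 3 + a * b ^ 2 / 2 + b ^ 3 / 6 - (a + b) / 2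

noncomputable def Ffun (u : ℝ) : ℝ := (1 - u ^ 2) ^ 2 / 4

noncomputable def zetaK (α : ℝ) (t : ℕ → ℝ) (n j : ℕ) : ℝ :=
  if j = n then thetaK α t n n else thetaK α t n j - thetaK α t n (j + 1)

/-! Telescoping gives `q^{(n)}_{n-j} = ∑_{i=j}^{n} a^{(i)}_{i-j}`, so after exchanging the two sums
it suffices that `∑_{j=k}^{i} a^{(i)}_{i-j} θ^{(j)}_{j-k} = δ_{ik}`. The recursion defining the DOC
kernels says that `θ` is a left inverse of the lower-triangular matrix `(a^{(i)}_{i-j})`, whose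
diagonal `q^{(k)}_0` is positive; a left inverse of a square matrix is also a right inverse. -/

section LowerTriangular

variable {R : Type*} [CommRing R]

def lowerMatrix (s : Finset ℕ) (A : ℕ → ℕ → R) : Matrix s s R :=
  fun p q => if (q : ℕ) ≤ p then A p q else 0

theorem lowerMatrix_mul_lowerMatrix_apply (A B : ℕ → ℕ → R) {m M : ℕ} (p q : Icc m M) :
    (lowerMatrix (Icc m M) B * lowerMatrix (Icc m M) A) p q =
      ∑ r ∈ Icc (q : ℕ) p, B p r * A r q := by
  obtain ⟨p, hp⟩ := p
  obtain ⟨q, hq⟩ := q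
  rw [mem_Icc] at hp hq
  have hfilter : (Icc m M).filter (fun r => r ≤ p ∧ q ≤ r) = Icc q p := by
    ext r; simp only [mem_filter, mem_Icc]; omega
  simp only [Matrix.mul_apply, lowerMatrix, ite_zero_mul_ite_zero]
  rw [Finset.sum_coe_sort (Icc m M) fun r => if r ≤ p ∧ q ≤ r then B p r * A r q else 0,
    ← sum_filter, hfilter]

theorem sum_Icc_mul_eq_ite_of_sum_Icc_mul_eq_ite (A B : ℕ → ℕ → R) {m M : ℕ}
    (h : ∀ i ∈ Icc m M, ∀ k ∈ Icc m M,
      ∑ j ∈ Icc k i, B i j * A j k = if i = k then 1 else 0) :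
    ∀ i ∈ Icc m M, ∀ k ∈ Icc m M,
      ∑ j ∈ Icc k i, A i j * B j k = if i = k then 1 else 0 := by
  have hBA : lowerMatrix (Icc m M) B * lowerMatrix (Icc m M) A = 1 := by
    ext p q
    rw [lowerMatrix_mul_lowerMatrix_apply, h p p.2 q q.2, Matrix.one_apply]
    exact if_congr Subtype.ext_iff.symm rfl rfl
  intro i hi k hk
  have hAB := congrFun₂ (mul_eq_one_comm.mp hBA : lowerMatrix _ A * lowerMatrix _ B = 1)
    ⟨i, hi⟩ ⟨k, hk⟩
  rwa [lowerMatrix_mul_lowerMatrix_apply, Matrix.one_apply,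
    if_congr Subtype.ext_iff rfl rfl] at hAB

end LowerTriangular

section DOC

-- `docKernel A n k` is the paper's `θ^{(n)}_{n-k}`; `thetaAux A n M` lists `θ^{(n)}_0, …, θ^{(n)}_M`.
noncomputable def docKernel (A : ℕ → ℕ → ℝ) (n k : ℕ) : ℝ := thetaAux A n (n - k) (n - k)

theorem thetaAux_of_le (A : ℕ → ℕ → ℝ) (n : ℕ) {M m : ℕ} (hm : m ≤ M) :
    thetaAux A n M m = thetaAux A n m m := by
  induction M with
  | zero => rw [Nat.le_zero.mp hm]
  | succ M ih =>
    rcases hm.lt_or_eq with hlt | rfl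
    · rw [thetaAux, if_pos (Nat.lt_succ_iff.mp hlt), ih (Nat.lt_succ_iff.mp hlt)]
    · rfl

theorem docKernel_self (A : ℕ → ℕ → ℝ) (k : ℕ) : docKernel A k k = 1 / A k k := by
  simp [docKernel, thetaAux]

theorem docKernel_of_lt (A : ℕ → ℕ → ℝ) {n k : ℕ} (hkn : k < n) :
    docKernel A n k = -(1 / A k k) * ∑ i ∈ Icc (k + 1) n, docKernel A n i * A i k := by
  obtain ⟨M, hM⟩ : ∃ M, n - k = M + 1 := ⟨n - k - 1, by omega⟩
  rw [docKernel, hM, thetaAux, if_neg (by omega), show n - (M + 1) = k by omega]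
  congr 1
  refine sum_nbij' (fun ℓ => n - ℓ) (fun i => n - i) ?_ ?_ ?_ ?_ ?_
  all_goals intro ℓ hℓ; simp only [mem_range, mem_Icc] at hℓ ⊢
  all_goals try omega
  rw [thetaAux_of_le A n (by omega : ℓ ≤ M), docKernel, Nat.sub_sub_self (by omega : ℓ ≤ n)]

theorem sum_docKernel_mul (A : ℕ → ℕ → ℝ) {n k : ℕ} (hk : A k k ≠ 0) :
    ∑ j ∈ Icc k n, docKernel A n j * A j k = if n = k then 1 else 0 := by
  rcases lt_trichotomy k n with hlt | rfl | hgt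
  · rw [if_neg hlt.ne', ← insert_Icc_add_one_left_eq_Icc hlt.le, sum_insert (by simp),
      docKernel_of_lt A hlt]
    field_simp
    ring
  · rw [Icc_self, sum_singleton, docKernel_self, if_pos rfl, one_div_mul_cancel hk]
  · rw [Icc_eq_empty_of_lt hgt, sum_empty, if_neg hgt.ne]

theorem sum_mul_docKernel (A : ℕ → ℕ → ℝ) {m M : ℕ} (hA : ∀ j ∈ Icc m M, A j j ≠ 0) :
    ∀ i ∈ Icc m M, ∀ k ∈ Icc m M,
      ∑ j ∈ Icc k i, A i j * docKernel A j k = if i = k then 1 else 0 :=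
  sum_Icc_mul_eq_ite_of_sum_Icc_mul_eq_ite A (docKernel A)
    fun _ _ k hk => sum_docKernel_mul A (hA k hk)

end DOC

theorem qK_eq_sum_aK (α : ℝ) (t : ℕ → ℝ) {j n : ℕ} (hjn : j ≤ n) :
    qK α t n j = ∑ i ∈ Icc j n, aK α t i j := by
  induction n, hjn using Nat.le_induction with
  | base => rw [Icc_self, sum_singleton, aK, if_pos rfl]
  | succ n hjn ih =>
    rw [sum_Icc_succ_top (by omega), ← ih, aK, if_neg (by omega), Nat.add_sub_cancel]
    ring

theorem qK_self_pos {α : ℝ} (hα : 0 < α) (t : ℕ → ℝ) {k : ℕ} (hk : t (k - 1) < t k) :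
    0 < qK α t k k := by
  have hint : IntervalIntegrable (fun s => omegaK α (t k - s)) MeasureTheory.volume
      (t (k - 1)) (t k) := by
    have := ((intervalIntegral.intervalIntegrable_rpow' (r := α - 1) (by linarith)).div_const
      (Real.Gamma α)).comp_sub_left (t k) (a := t k - t (k - 1)) (b := t k - t k)
    simpa [omegaK, sub_sub_cancel] using this
  refine intervalIntegral.intervalIntegral_pos_of_pos_on hint (fun s hs => ?_) hk
  exact div_pos (Real.rpow_pos_of_pos (sub_pos.mpr hs.2) _) (Real.Gamma_pos_of_pos hα)

theorem stmt11_general (α : ℝ) (hα0 : 0 < α)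
    (N : ℕ) (t : ℕ → ℝ) (ht : ∀ k, k < N → t k < t (k + 1)) :
    ∀ n k, 1 ≤ k → k ≤ n → n ≤ N →
      ∑ j ∈ Finset.Icc k n, qK α t n j * thetaK α t j k = 1 := by
  intro n k hk hkn hnN
  have hdiag : ∀ j ∈ Icc 1 N, aK α t j j ≠ 0 := fun j hj => by
    rw [mem_Icc] at hj
    rw [aK, if_pos rfl]
    exact (qK_self_pos hα0 t (by simpa [Nat.sub_add_cancel hj.1] using ht (j - 1) (by omega))).ne'
  calc ∑ j ∈ Icc k n, qK α t n j * thetaK α t j k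
      = ∑ j ∈ Icc k n, ∑ i ∈ Icc j n, aK α t i j * docKernel (aK α t) j k :=
        sum_congr rfl fun j hj => by
          rw [qK_eq_sum_aK α t (mem_Icc.mp hj).2, sum_mul]; rfl
    _ = ∑ i ∈ Icc k n, ∑ j ∈ Icc k i, aK α t i j * docKernel (aK α t) j k :=
        sum_comm' fun j i => by simp only [mem_Icc]; omega
    _ = ∑ i ∈ Icc k n, if i = k then 1 else 0 :=
        sum_congr rfl fun i hi => by
          rw [mem_Icc] at hi
          exact sum_mul_docKernel (aK α t) hdiag i (mem_Icc.mpr ⟨by omega, by omega⟩) k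
            (mem_Icc.mpr ⟨hk, by omega⟩)
    _ = 1 := by rw [sum_ite_eq' (Icc k n) k fun _ => 1, if_pos (mem_Icc.mpr ⟨le_rfl, hkn⟩)]

theorem stmt11 (α : ℝ) (hα0 : 0 < α) (hα1 : α < 1)
    (N : ℕ) (t : ℕ → ℝ) (ht0 : t 0 = 0) (ht : ∀ k, k < N → t k < t (k + 1)) :
    ∀ n k, 1 ≤ k → k ≤ n → n ≤ N →
      ∑ j ∈ Finset.Icc k n, qK α t n j * thetaK α t j k = 1 :=
  stmt11_general α hα0 N t ht
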